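/- Let G be a minimal (3, 3)-Ramsey graph and let v be a vertex of G with d(v) = 4. Then the subgraph of G induced by the neighborhood of v is a complete graph on 4 vertices, i.e. G(v) = K_4. -/

import Mathlib

open SimpleGraph

/-- A monochromatic `n`-clique of color `col` in the 2-coloring `c` of the edges of `G`. -/
def IsMonoNClique {V : Type} (G : SimpleGraph V) (c : Sym2 V → Bool) (col : Bool)
    (n : ℕ) (t : Finset V) : Prop :=
  G.IsNClique n t ∧ ∀ u ∈ t, ∀ v ∈ t, u ≠ v → c s(u, v) = col

/-- A 2-coloring of the edges of `G` is `(p, q)`-free if it contains no `p`-clique of the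
first color and no `q`-clique of the second color. -/
def IsFree {V : Type} (G : SimpleGraph V) (p q : ℕ) (c : Sym2 V → Bool) : Prop :=
  (¬ ∃ t : Finset V, IsMonoNClique G c true p t) ∧
  (¬ ∃ t : Finset V, IsMonoNClique G c false q t)

/-- `G → (p, q)`: every 2-coloring of the edges of `G` contains a `p`-clique of the first
color or a `q`-clique of the second color. -/
def Arrows {V : Type} (G : SimpleGraph V) (p q : ℕ) : Prop :=
  ∀ c : Sym2 V → Bool, ¬ IsFree G p q c

/-- `G` is a minimal `(p, q)`-Ramsey graph: `G → (p, q)` and `H ↛ (p, q)` for every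
proper subgraph `H` of `G` (on a vertex subset `s`, with edge set contained in that of `G`). -/
def MinimalArrows {V : Type} (G : SimpleGraph V) (p q : ℕ) : Prop :=
  Arrows G p q ∧
    ∀ (s : Set V) (H : SimpleGraph ↥s), H ≤ G.induce s →
      (s ≠ Set.univ ∨ H ≠ G.induce s) → ¬ Arrows H p q

/-- The degree of a vertex. -/
noncomputable def deg {V : Type} (G : SimpleGraph V) (v : V) : ℕ :=
  (G.neighborSet v).ncard

/-- Minimum degree. -/
noncomputable def minDeg {V : Type} (G : SimpleGraph V) : ℕ :=
  sInf (Set.range (deg G))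

/-- Maximum degree. -/
noncomputable def maxDeg {V : Type} (G : SimpleGraph V) : ℕ :=
  sSup (Set.range (deg G))

/-- Independence number: the clique number of the complement. -/
noncomputable def indepNum {V : Type} (G : SimpleGraph V) : ℕ :=
  Gᶜ.cliqueNum

/-- The graph obtained from `H` by adding one new vertex whose neighborhood is `M`. -/
def addVertex {W : Type} (H : SimpleGraph W) (M : Set W) : SimpleGraph (Option W) where
  Adj x y :=
    match x, y with
    | some a, some b => H.Adj a b
    | some a, none => a ∈ M
    | none, some b => b ∈ M
    | none, none => False
  symm := by
    constructor
    rintro (_ | a) (_ | b) h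
    · exact h.elim
    · exact h
    · exact h
    · exact h.symm
  loopless := by
    constructor
    rintro (_ | a) h
    · exact h.elim
    · exact H.ne_of_adj h rfl

/-- `c'` extends the 2-coloring `c` to the graph with one added vertex. -/
def ExtendsTo {W : Type} (c : Sym2 W → Bool) (c' : Sym2 (Option W) → Bool) : Prop :=
  ∀ e : Sym2 W, c' (e.map some) = c e

/-- `M` is a marked vertex set in `H`: some `(3,3)`-free 2-coloring of the edges of `H`
cannot be extended to a `(3,3)`-free 2-coloring of the edges of `H` plus a new vertex
whose neighborhood is `M`. -/
def IsMarked {W : Type} (H : SimpleGraph W) (M : Set W) : Prop :=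
  ∃ c : Sym2 W → Bool, IsFree H 3 3 c ∧
    ∀ c' : Sym2 (Option W) → Bool, ExtendsTo c c' → ¬ IsFree (addVertex H M) 3 3 c'

/-- A complete family of marked vertex sets in `H`. -/
def IsCompleteFamily {W ι : Type} (H : SimpleGraph W) (M : ι → Set W) : Prop :=
  (∀ i, IsMarked H (M i)) ∧
  ∀ c : Sym2 W → Bool, IsFree H 3 3 c →
    ∃ i, ∀ c' : Sym2 (Option W) → Bool, ExtendsTo c c' → ¬ IsFree (addVertex H (M i)) 3 3 c'

/-- The `K_3`-multiplicity of `G`: the minimum number of monochromatic triangles over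
all 2-colorings of the edges of `G`. -/
noncomputable def K3Multiplicity {V : Type} (G : SimpleGraph V) : ℕ :=
  sInf {m | ∃ c : Sym2 V → Bool,
    {t : Finset V | ∃ col, IsMonoNClique G c col 3 t}.ncard = m}

/-- If `G` is a minimal `(3, 3)`-Ramsey graph and `d(v) = 4`, then `G(v) = K₄`, i.e. the
subgraph induced by the neighborhood of `v` is complete (on its 4 vertices). -/
theorem stmt_2 {V : Type} [Fintype V] (G : SimpleGraph V) (hmin : MinimalArrows G 3 3)
    (v : V) (hd : deg G v = 4) :
    G.induce (G.neighborSet v) = ⊤ := by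
  classical
  obtain ⟨harr, hsub⟩ := hmin
  have hne : ({v}ᶜ : Set V) ≠ Set.univ := by
    intro h
    have : v ∈ ({v}ᶜ : Set V) := h ▸ Set.mem_univ v
    simp at this
  have hnarr : ¬ Arrows (G.induce ({v}ᶜ : Set V)) 3 3 :=
    hsub _ _ le_rfl (Or.inl hne)
  rw [Arrows] at hnarr
  push_neg at hnarr
  obtain ⟨c, hcfree⟩ := hnarr
  have hmem : ∀ {w : V}, w ≠ v → w ∈ ({v}ᶜ : Set V) := fun hw => by simpa using hw
  have hvs : ∀ w : ({v}ᶜ : Set V), (w : V) ≠ v := fun w => by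
    exact w.2
  have key : ∀ f : V → Bool,
      ∃ (a b : V) (ha : a ≠ v) (hb : b ≠ v), a ≠ b ∧ G.Adj v a ∧ G.Adj v b ∧ G.Adj a b ∧
        f a = f b ∧ f a = c s(⟨a, hmem ha⟩, ⟨b, hmem hb⟩) := by
    intro f
    set c' : Sym2 V → Bool := Sym2.lift ⟨fun a b =>
      if ha : a = v then f b else if hb : b = v then f a
      else c s(⟨a, hmem ha⟩, ⟨b, hmem hb⟩), by
        intro a b
        by_cases ha : a = v <;> by_cases hb : b = v
        · subst ha; subst hb; simp
        · simp [ha, hb]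
        · simp [ha, hb]
        · simp only [dif_neg ha, dif_neg hb]
          rw [Sym2.eq_swap]⟩ with hc'
    have hc'v : ∀ (b : V) (hb : b ≠ v), c' s(v, b) = f b := by
      intro b hb
      simp [hc']
    have hc'e : ∀ (a b : V) (ha : a ≠ v) (hb : b ≠ v),
        c' s(a, b) = c s(⟨a, hmem ha⟩, ⟨b, hmem hb⟩) := by
      intro a b ha hb
      simp [hc', ha, hb]
    have hnf := harr c'
    rw [IsFree, not_and_or, not_not, not_not] at hnf
    have hex : ∃ (col : Bool) (t : Finset V), IsMonoNClique G c' col 3 t := by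
      rcases hnf with h | h
      · exact ⟨true, h⟩
      · exact ⟨false, h⟩
    obtain ⟨col, t, ⟨htc, htcard⟩, htcol⟩ := hex
    obtain ⟨x, y, z, hxy, hxz, hyz, hteq⟩ := Finset.card_eq_three.mp htcard
    subst hteq
    by_cases hvt : v ∈ ({x, y, z} : Finset V)
    · have main : ∀ a b : V, a ∈ ({x, y, z} : Finset V) → b ∈ ({x, y, z} : Finset V) →
          a ≠ b → ∀ (ha : a ≠ v) (hb : b ≠ v),
          ∃ (a b : V) (ha : a ≠ v) (hb : b ≠ v), a ≠ b ∧ G.Adj v a ∧ G.Adj v b ∧ G.Adj a b ∧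
            f a = f b ∧ f a = c s(⟨a, hmem ha⟩, ⟨b, hmem hb⟩) := by
        intro a b hat hbt hab ha hb
        have h1 := htcol v hvt a hat (Ne.symm ha)
        have h2 := htcol v hvt b hbt (Ne.symm hb)
        have h3 := htcol a hat b hbt hab
        rw [hc'v a ha] at h1
        rw [hc'v b hb] at h2
        rw [hc'e a b ha hb] at h3
        exact ⟨a, b, ha, hb, hab, htc hvt hat (Ne.symm ha), htc hvt hbt (Ne.symm hb),
          htc hat hbt hab, h1.trans h2.symm, h1.trans h3.symm⟩
      have hvxyz : v = x ∨ v = y ∨ v = z := by simpa using hvt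
      rcases hvxyz with h | h | h
      · exact main y z (by simp) (by simp) hyz (by rw [h]; exact hxy.symm)
          (by rw [h]; exact hxz.symm)
      · exact main x z (by simp) (by simp) hxz (by rw [h]; exact hxy)
          (by rw [h]; exact hyz.symm)
      · exact main x y (by simp) (by simp) hxy (by rw [h]; exact hxz)
          (by rw [h]; exact hyz)
    · exfalso
      have hxv : x ≠ v := fun h => hvt (by simp [h])
      have hyv : y ≠ v := fun h => hvt (by simp [h])
      have hzv : z ≠ v := fun h => hvt (by simp [h])
      set t' : Finset ({v}ᶜ : Set V) :=
        {⟨x, hmem hxv⟩, ⟨y, hmem hyv⟩, ⟨z, hmem hzv⟩} with ht'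
      have memt : ∀ u : ({v}ᶜ : Set V), u ∈ t' → (u : V) ∈ ({x, y, z} : Finset V) := by
        intro u hu
        simp only [ht', Finset.mem_insert, Finset.mem_singleton] at hu
        rcases hu with h | h | h <;> subst h <;> simp
      have hfree : IsMonoNClique (G.induce ({v}ᶜ : Set V)) c col 3 t' := by
        refine ⟨⟨?_, ?_⟩, ?_⟩
        · intro u hu w hw huw
          simp only [comap_adj, Function.Embedding.coe_subtype]
          exact htc (memt u hu) (memt w hw) (fun h => huw (Subtype.ext h))
        · rw [ht']
          rw [Finset.card_insert_of_notMem, Finset.card_insert_of_notMem,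
            Finset.card_singleton]
          · simp [hyz]
          · simp [hxy, hxz]
        · intro u hu w hw huw
          have h1 := htcol (u : V) (memt u hu) (w : V) (memt w hw)
            (fun h => huw (Subtype.ext h))
          have h2 : c' s((u : V), (w : V)) = c s(u, w) :=
            hc'e (u : V) (w : V) (hvs u) (hvs w)
          rw [h2] at h1
          exact h1
      cases col
      · exact hcfree.2 ⟨t', hfree⟩
      · exact hcfree.1 ⟨t', hfree⟩
  -- main argument
  ext ⟨x, hx⟩ ⟨y, hy⟩
  simp only [comap_adj, Function.Embedding.coe_subtype, top_adj, ne_eq, Subtype.mk.injEq]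
  constructor
  · exact fun h => h.ne
  · intro hxy
    by_contra hnadj
    have hx' : G.Adj v x := hx
    have hy' : G.Adj v y := hy
    have noadjxy : ∀ u w : V, (u = x ∨ u = y) → (w = x ∨ w = y) → u ≠ w → ¬ G.Adj u w := by
      rintro u w (rfl | rfl) (rfl | rfl) huw hadj
      · exact huw rfl
      · exact hnadj hadj
      · exact hnadj hadj.symm
      · exact huw rfl
    obtain ⟨a, b, hav, hbv, hab, hGva, hGvb, hGab, hfab, hfc⟩ :=
      key (fun w => decide (w = x ∨ w = y))
    have hfa : decide (a = x ∨ a = y) = false := by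
      cases hda : decide (a = x ∨ a = y)
      · rfl
      · exact absurd hGab (noadjxy a b (of_decide_eq_true hda)
          (of_decide_eq_true (hfab.symm.trans hda)) hab)
    have hfb : decide (b = x ∨ b = y) = false := hfab.symm.trans hfa
    have hcF : c s(⟨a, hmem hav⟩, ⟨b, hmem hbv⟩) = false := by
      rw [← hfc]; exact hfa
    have hanotin : ¬ (a = x ∨ a = y) := of_decide_eq_false hfa
    have hbnotin : ¬ (b = x ∨ b = y) := of_decide_eq_false hfb
    obtain ⟨a', b', ha'v, hb'v, hab', hGva', hGvb', hGab', hfab', hfc'⟩ :=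
      key (fun w => !decide (w = x ∨ w = y))
    have hd12 : decide (a' = x ∨ a' = y) = decide (b' = x ∨ b' = y) :=
      Bool.not_inj hfab'
    have hfa' : decide (a' = x ∨ a' = y) = false := by
      cases hda : decide (a' = x ∨ a' = y)
      · rfl
      · exact absurd hGab' (noadjxy a' b' (of_decide_eq_true hda)
          (of_decide_eq_true (hd12.symm.trans hda)) hab')
    have hfb' : decide (b' = x ∨ b' = y) = false := hd12.symm.trans hfa'
    have hcT : c s(⟨a', hmem ha'v⟩, ⟨b', hmem hb'v⟩) = true := by
      rw [← hfc', hfa']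
      rfl
    have hT2 : ((G.neighborSet v) \ {x, y} : Set V).ncard = 2 := by
      have hsub2 : ({x, y} : Set V) ⊆ G.neighborSet v := by
        rintro w (rfl | rfl)
        · exact hx
        · exact hy
      rw [Set.ncard_diff hsub2 (Set.toFinite _), Set.ncard_pair hxy]
      have h4 : (G.neighborSet v).ncard = 4 := hd
      rw [h4]
    obtain ⟨p, q, hpq, hPQ⟩ := Set.ncard_eq_two.mp hT2
    have hmemT : ∀ w : V, G.Adj v w → ¬ (w = x ∨ w = y) → w = p ∨ w = q := by
      intro w hw hnw
      have hwT : w ∈ ((G.neighborSet v) \ {x, y} : Set V) := ⟨hw, by simpa using hnw⟩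
      rw [hPQ] at hwT
      simpa using hwT
    have ha2 := hmemT a hGva hanotin
    have hb2 := hmemT b hGvb hbnotin
    have ha2' := hmemT a' hGva' (of_decide_eq_false hfa')
    have hb2' := hmemT b' hGvb' (of_decide_eq_false hfb')
    have hfin : c s(⟨a, hmem hav⟩, ⟨b, hmem hbv⟩)
        = c s(⟨a', hmem ha'v⟩, ⟨b', hmem hb'v⟩) := by
      rcases ha2 with rfl | rfl <;> rcases hb2 with rfl | rfl <;>
        rcases ha2' with rfl | rfl <;> rcases hb2' with rfl | rfl <;>
        first
          | exact absurd rfl hab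
          | exact absurd rfl hab'
          | exact absurd rfl hpq
          | rfl
          | rw [Sym2.eq_swap]
    rw [hcF, hcT] at hfin
    exact Bool.false_ne_true hfin
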